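/- Let w_i⁰(x) = P(J_i(x) = s_i⁰(x)) be the probability of attaining the minimum attainable cost. Then for x ∉ Q, w_i⁰(x) = Σ_{j ∈ I(x)} p_{ij} w_j⁰(F_i(x)), where I(x) = argmin_{j : p_{ij} > 0} s_j⁰(F_i(x)); and w_i⁰(x) = 1 for x ∈ Q. -/

import Mathlib

open Classical in
/-- Probability that the random route-switching process, started at node `x`
using route `i` for the first step, terminates in `Q` within `n` steps with
total cumulative cost (running plus terminal) at most `s`. -/
noncomputable def reachCDF {X : Type*} {M : ℕ} (Q : Set X)
    (F : Fin M → X → X) (K : Fin M → X → ℝ) (q : Fin M → X → ℝ)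
    (p : Fin M → Fin M → ℝ) : ℕ → Fin M → X → ℝ → ℝ
  | 0, i, x, s => if x ∈ Q ∧ q i x ≤ s then 1 else 0
  | n + 1, i, x, s =>
      if x ∈ Q then (if q i x ≤ s then 1 else 0)
      else ∑ j, p i j * reachCDF Q F K q p n j (F i x) (s - K i x)

/-- The CDF `w_i(x,s) = P(J_i(x) ≤ s)` of the random cumulative cost, as the
monotone limit of the finite-horizon probabilities. -/
noncomputable def costCDF {X : Type*} {M : ℕ} (Q : Set X)
    (F : Fin M → X → X) (K : Fin M → X → ℝ) (q : Fin M → X → ℝ)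
    (p : Fin M → Fin M → ℝ) (i : Fin M) (x : X) (s : ℝ) : ℝ :=
  ⨆ n : ℕ, reachCDF Q F K q p n i x s

/-- The minimum attainable cost `s_i⁰(x) = inf { s : P(J_i(x) ≤ s) > 0 }`. -/
noncomputable def minCost {X : Type*} {M : ℕ} (Q : Set X)
    (F : Fin M → X → X) (K : Fin M → X → ℝ) (q : Fin M → X → ℝ)
    (p : Fin M → Fin M → ℝ) (i : Fin M) (x : X) : ℝ :=
  sInf {s : ℝ | 0 < costCDF Q F K q p i x s}

/-!
Off `Q` the cost distribution satisfies the one-step recursion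
`P(J_i(x) ≤ s) = Σ_j p_{ij} P(J_j(F_i x) ≤ s - K_i(x))`, the limit of the same recursion
for the finite-horizon probabilities. Hence the cost can fall below `s` only if it can do so
along some successor `j` with `p_{ij} > 0`, which gives `s_i⁰(x) = K_i(x) + min_j s_j⁰(F_i x)`.
Evaluating the recursion at `s = s_i⁰(x)` then leaves exactly the minimizing successors: every
other successor `j` is evaluated strictly below its own minimum cost `s_j⁰(F_i x)`, where its
distribution vanishes.
-/

open Filter

section Successors

variable {ι : Type*} [Finite ι] {P : ι → Prop} {f : ι → ℝ}

lemma finite_setOf_exists_and_eq : {t | ∃ j, P j ∧ t = f j}.Finite :=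
  (Set.finite_range fun j : {j // P j} => f j).subset <| by
    rintro t ⟨j, hj, rfl⟩
    exact Set.mem_range_self (f := fun j : {j // P j} => f j) ⟨j, hj⟩

lemma csInf_setOf_exists_and_eq_le {j : ι} (hj : P j) :
    sInf {t | ∃ j, P j ∧ t = f j} ≤ f j :=
  csInf_le finite_setOf_exists_and_eq.bddBelow ⟨j, hj, rfl⟩

lemma exists_csInf_setOf_exists_and_eq (h : ∃ j, P j) :
    ∃ j, P j ∧ sInf {t | ∃ j, P j ∧ t = f j} = f j := by
  obtain ⟨j, hj⟩ := h
  exact Set.Nonempty.csInf_mem (s := {t | ∃ j, P j ∧ t = f j}) ⟨f j, j, hj, rfl⟩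
    finite_setOf_exists_and_eq

end Successors

section RouteSwitching

variable {X : Type*} {M : ℕ} {Q : Set X} {F : Fin M → X → X} {K : Fin M → X → ℝ}
  {q : Fin M → X → ℝ} {p : Fin M → Fin M → ℝ}

lemma reachCDF_nonneg (hp0 : ∀ i j, 0 ≤ p i j) (n : ℕ) (i : Fin M) (x : X) (s : ℝ) :
    0 ≤ reachCDF Q F K q p n i x s := by
  induction n generalizing i x s with
  | zero => simp only [reachCDF]; split <;> norm_num
  | succ n ih =>
    simp only [reachCDF]
    split
    · split <;> norm_num
    · exact Finset.sum_nonneg fun j _ => mul_nonneg (hp0 i j) (ih ..)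

lemma reachCDF_le_one (hp0 : ∀ i j, 0 ≤ p i j) (hp1 : ∀ i, ∑ j, p i j = 1)
    (n : ℕ) (i : Fin M) (x : X) (s : ℝ) : reachCDF Q F K q p n i x s ≤ 1 := by
  induction n generalizing i x s with
  | zero => simp only [reachCDF]; split <;> norm_num
  | succ n ih =>
    simp only [reachCDF]
    split
    · split <;> norm_num
    · calc ∑ j, p i j * reachCDF Q F K q p n j (F i x) (s - K i x)
          ≤ ∑ j, p i j := Finset.sum_le_sum fun j _ => mul_le_of_le_one_right (hp0 i j) (ih ..)
        _ = 1 := hp1 i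

lemma monotone_reachCDF (hp0 : ∀ i j, 0 ≤ p i j) (i : Fin M) (x : X) (s : ℝ) :
    Monotone fun n => reachCDF Q F K q p n i x s := by
  refine monotone_nat_of_le_succ fun n => ?_
  induction n generalizing i x s with
  | zero =>
    by_cases hx : x ∈ Q
    · simp [reachCDF, hx]
    · rw [show reachCDF Q F K q p 0 i x s = 0 by simp [reachCDF, hx]]
      exact reachCDF_nonneg hp0 1 i x s
  | succ n ih =>
    simp only [reachCDF]
    split
    · exact le_rfl
    · exact Finset.sum_le_sum fun j _ => mul_le_mul_of_nonneg_left (ih ..) (hp0 i j)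

lemma bddAbove_range_reachCDF (hp0 : ∀ i j, 0 ≤ p i j) (hp1 : ∀ i, ∑ j, p i j = 1)
    (i : Fin M) (x : X) (s : ℝ) : BddAbove (Set.range fun n => reachCDF Q F K q p n i x s) :=
  ⟨1, by rintro _ ⟨n, rfl⟩; exact reachCDF_le_one hp0 hp1 n i x s⟩

lemma tendsto_reachCDF_costCDF (hp0 : ∀ i j, 0 ≤ p i j) (hp1 : ∀ i, ∑ j, p i j = 1)
    (i : Fin M) (x : X) (s : ℝ) :
    Tendsto (fun n => reachCDF Q F K q p n i x s) atTop (nhds (costCDF Q F K q p i x s)) :=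
  tendsto_atTop_ciSup (monotone_reachCDF hp0 i x s) (bddAbove_range_reachCDF hp0 hp1 i x s)

lemma costCDF_nonneg (hp0 : ∀ i j, 0 ≤ p i j) (hp1 : ∀ i, ∑ j, p i j = 1)
    (i : Fin M) (x : X) (s : ℝ) : 0 ≤ costCDF Q F K q p i x s :=
  (reachCDF_nonneg hp0 0 i x s).trans (le_ciSup (bddAbove_range_reachCDF hp0 hp1 i x s) 0)

lemma costCDF_of_mem {i : Fin M} {x : X} (hx : x ∈ Q) (s : ℝ) :
    costCDF Q F K q p i x s = if q i x ≤ s then 1 else 0 := by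
  have hconst : (fun n => reachCDF Q F K q p n i x s) = fun _ => if q i x ≤ s then 1 else 0 := by
    funext n
    cases n <;> simp [reachCDF, hx]
  rw [costCDF, hconst, ciSup_const]

lemma costCDF_of_notMem (hp0 : ∀ i j, 0 ≤ p i j) (hp1 : ∀ i, ∑ j, p i j = 1)
    {i : Fin M} {x : X} (hx : x ∉ Q) (s : ℝ) :
    costCDF Q F K q p i x s = ∑ j, p i j * costCDF Q F K q p j (F i x) (s - K i x) := by
  have hsucc := (tendsto_reachCDF_costCDF (Q := Q) (F := F) (K := K) (q := q) hp0 hp1 i x s).comp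
    (tendsto_add_atTop_nat 1)
  simp only [Function.comp_def, reachCDF, if_neg hx] at hsucc
  exact tendsto_nhds_unique hsucc <| tendsto_finsetSum _ fun j _ =>
    (tendsto_reachCDF_costCDF hp0 hp1 j (F i x) (s - K i x)).const_mul _

lemma costCDF_pos_iff_of_notMem (hp0 : ∀ i j, 0 ≤ p i j) (hp1 : ∀ i, ∑ j, p i j = 1)
    {i : Fin M} {x : X} (hx : x ∉ Q) (s : ℝ) :
    0 < costCDF Q F K q p i x s ↔
      ∃ j, 0 < p i j ∧ 0 < costCDF Q F K q p j (F i x) (s - K i x) := by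
  have hterm (j : Fin M) : 0 ≤ p i j * costCDF Q F K q p j (F i x) (s - K i x) :=
    mul_nonneg (hp0 i j) (costCDF_nonneg hp0 hp1 ..)
  rw [costCDF_of_notMem hp0 hp1 hx, Finset.sum_pos_iff_of_nonneg fun j _ => hterm j]
  constructor
  · rintro ⟨j, -, hj⟩
    exact ⟨j, pos_of_mul_pos_left hj (costCDF_nonneg hp0 hp1 ..),
      pos_of_mul_pos_right hj (hp0 i j)⟩
  · rintro ⟨j, hpj, hj⟩
    exact ⟨j, Finset.mem_univ j, mul_pos hpj hj⟩

lemma reachCDF_eq_zero_of_neg (hK : ∀ i x, 0 ≤ K i x) (hq : ∀ i, ∀ x ∈ Q, 0 ≤ q i x)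
    (n : ℕ) (i : Fin M) (x : X) {s : ℝ} (hs : s < 0) : reachCDF Q F K q p n i x s = 0 := by
  induction n generalizing i x s with
  | zero => simp only [reachCDF, ite_eq_right_iff]; rintro ⟨hx, hqs⟩; linarith [hq i x hx]
  | succ n ih =>
    by_cases hx : x ∈ Q
    · simp only [reachCDF, if_pos hx, ite_eq_right_iff]; intro hqs; linarith [hq i x hx]
    · simp only [reachCDF, if_neg hx]
      exact Finset.sum_eq_zero fun j _ => by rw [ih j _ (by linarith [hK i x]), mul_zero]

lemma bddBelow_setOf_costCDF_pos (hK : ∀ i x, 0 ≤ K i x) (hq : ∀ i, ∀ x ∈ Q, 0 ≤ q i x)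
    (i : Fin M) (x : X) : BddBelow {s | 0 < costCDF Q F K q p i x s} := by
  refine ⟨0, fun s hs => not_lt.mp fun hneg => ?_⟩
  simp only [Set.mem_ofPred_eq, costCDF, reachCDF_eq_zero_of_neg hK hq _ i x hneg, ciSup_const,
    lt_self_iff_false] at hs

lemma minCost_le_of_costCDF_pos (hK : ∀ i x, 0 ≤ K i x) (hq : ∀ i, ∀ x ∈ Q, 0 ≤ q i x)
    {i : Fin M} {x : X} {s : ℝ} (hs : 0 < costCDF Q F K q p i x s) :
    minCost Q F K q p i x ≤ s :=
  csInf_le (bddBelow_setOf_costCDF_pos hK hq i x) hs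

lemma costCDF_eq_zero_of_lt_minCost (hK : ∀ i x, 0 ≤ K i x) (hq : ∀ i, ∀ x ∈ Q, 0 ≤ q i x)
    (hp0 : ∀ i j, 0 ≤ p i j) (hp1 : ∀ i, ∑ j, p i j = 1)
    {i : Fin M} {x : X} {s : ℝ} (hs : s < minCost Q F K q p i x) :
    costCDF Q F K q p i x s = 0 :=
  ((costCDF_nonneg hp0 hp1 i x s).eq_or_lt.resolve_right fun hpos =>
    hs.not_ge (minCost_le_of_costCDF_pos hK hq hpos)).symm

lemma minCost_of_mem {i : Fin M} {x : X} (hx : x ∈ Q) : minCost Q F K q p i x = q i x := by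
  have hset : {s | 0 < costCDF Q F K q p i x s} = Set.Ici (q i x) := by
    ext s
    by_cases h : q i x ≤ s <;> simp [costCDF_of_mem hx, h]
  rw [minCost, hset, csInf_Ici]

lemma exists_pos_of_sum_eq_one (hp0 : ∀ i j, 0 ≤ p i j) (hp1 : ∀ i, ∑ j, p i j = 1)
    (i : Fin M) : ∃ j, 0 < p i j := by
  obtain ⟨j, -, hj⟩ := (Finset.sum_pos_iff_of_nonneg fun j _ => hp0 i j).mp (hp1 i ▸ one_pos)
  exact ⟨j, hj⟩

lemma minCost_of_notMem (hK : ∀ i x, 0 ≤ K i x) (hq : ∀ i, ∀ x ∈ Q, 0 ≤ q i x)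
    (hp0 : ∀ i j, 0 ≤ p i j) (hp1 : ∀ i, ∑ j, p i j = 1)
    (hS : ∀ i x, {s | 0 < costCDF Q F K q p i x s}.Nonempty) {i : Fin M} {x : X} (hx : x ∉ Q) :
    minCost Q F K q p i x =
      K i x + sInf {t | ∃ j, 0 < p i j ∧ t = minCost Q F K q p j (F i x)} := by
  obtain ⟨j₀, hpj₀, hmin⟩ := exists_csInf_setOf_exists_and_eq
    (f := (minCost Q F K q p · (F i x))) (exists_pos_of_sum_eq_one hp0 hp1 i)
  rw [hmin]
  apply le_antisymm
  · suffices minCost Q F K q p i x - K i x ≤ minCost Q F K q p j₀ (F i x) by linarith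
    refine le_csInf (hS j₀ (F i x)) fun t ht => ?_
    have hKT : 0 < costCDF Q F K q p i x (K i x + t) :=
      (costCDF_pos_iff_of_notMem hp0 hp1 hx _).mpr ⟨j₀, hpj₀, by rwa [add_sub_cancel_left]⟩
    linarith [minCost_le_of_costCDF_pos hK hq hKT]
  · refine le_csInf (hS i x) fun s hs => ?_
    obtain ⟨j, hpj, hj⟩ := (costCDF_pos_iff_of_notMem hp0 hp1 hx s).mp hs
    have hj₀j : minCost Q F K q p j₀ (F i x) ≤ minCost Q F K q p j (F i x) :=
      hmin ▸ csInf_setOf_exists_and_eq_le (f := (minCost Q F K q p · (F i x))) hpj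
    linarith [minCost_le_of_costCDF_pos hK hq hj]

end RouteSwitching

open Classical in
theorem minCostProb_recursion_general {X : Type*} {M : ℕ} (Q : Set X)
    (F : Fin M → X → X) (K : Fin M → X → ℝ) (q : Fin M → X → ℝ)
    (p : Fin M → Fin M → ℝ)
    (hK : ∀ i x, 0 < K i x) (hq : ∀ i, ∀ x ∈ Q, 0 ≤ q i x)
    (hp0 : ∀ i j, 0 ≤ p i j) (hp1 : ∀ i, ∑ j, p i j = 1)
    (hAS : ∀ (i : Fin M) (x : X),
      Filter.Tendsto (fun s => costCDF Q F K q p i x s) Filter.atTop (nhds 1))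
    (w0 : Fin M → X → ℝ)
    (hw0 : ∀ i x, w0 i x = costCDF Q F K q p i x (minCost Q F K q p i x)) :
    (∀ i : Fin M, ∀ x ∉ Q,
        w0 i x = ∑ j : Fin M,
          if 0 < p i j ∧ minCost Q F K q p j (F i x)
              = sInf {t : ℝ | ∃ j' : Fin M, 0 < p i j' ∧
                  t = minCost Q F K q p j' (F i x)}
          then p i j * w0 j (F i x) else 0) ∧
    (∀ i : Fin M, ∀ x ∈ Q, w0 i x = 1) := by
  have hK₀ (i : Fin M) (x : X) : 0 ≤ K i x := (hK i x).le
  have hS (i : Fin M) (x : X) : {s | 0 < costCDF Q F K q p i x s}.Nonempty :=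
    ((hAS i x).eventually (eventually_gt_nhds one_pos)).exists
  refine ⟨fun i x hx => ?_, fun i x hx => ?_⟩
  · rw [hw0, minCost_of_notMem hK₀ hq hp0 hp1 hS hx, costCDF_of_notMem hp0 hp1 hx,
      add_sub_cancel_left]
    refine Finset.sum_congr rfl fun j _ => ?_
    split_ifs with hmin
    · rw [hw0, hmin.2]
    · rcases (hp0 i j).eq_or_lt with hpj | hpj
      · rw [← hpj, zero_mul]
      · have hlt := (csInf_setOf_exists_and_eq_le (f := (minCost Q F K q p · (F i x))) hpj)
          |>.lt_of_ne fun h => hmin ⟨hpj, h.symm⟩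
        rw [costCDF_eq_zero_of_lt_minCost hK₀ hq hp0 hp1 hlt, mul_zero]
  · rw [hw0, minCost_of_mem hx, costCDF_of_mem hx, if_pos le_rfl]

open Classical in
/-- **Recursion for the probability `w_i⁰(x)` of attaining the minimum
attainable cost:** off `Q`, `w_i⁰(x) = Σ_{j ∈ I(x)} p_{ij} w_j⁰(F_i(x))`,
where `I(x)` is the set of routes `j` with `p_{ij} > 0` minimizing
`s_j⁰(F_i(x))`; and `w_i⁰ = 1` on `Q`. -/
theorem minCostProb_recursion {X : Type*} [Fintype X] {M : ℕ} (Q : Set X)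
    (F : Fin M → X → X) (K : Fin M → X → ℝ) (q : Fin M → X → ℝ)
    (p : Fin M → Fin M → ℝ)
    (hK : ∀ i x, 0 < K i x) (hq : ∀ i, ∀ x ∈ Q, 0 ≤ q i x)
    (hp0 : ∀ i j, 0 ≤ p i j) (hp1 : ∀ i, ∑ j, p i j = 1)
    (hAS : ∀ (i : Fin M) (x : X),
      Filter.Tendsto (fun s => costCDF Q F K q p i x s) Filter.atTop (nhds 1))
    (w0 : Fin M → X → ℝ)
    (hw0 : ∀ i x, w0 i x = costCDF Q F K q p i x (minCost Q F K q p i x)) :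
    (∀ i : Fin M, ∀ x ∉ Q,
        w0 i x = ∑ j : Fin M,
          if 0 < p i j ∧ minCost Q F K q p j (F i x)
              = sInf {t : ℝ | ∃ j' : Fin M, 0 < p i j' ∧
                  t = minCost Q F K q p j' (F i x)}
          then p i j * w0 j (F i x) else 0) ∧
    (∀ i : Fin M, ∀ x ∈ Q, w0 i x = 1) :=
  minCostProb_recursion_general Q F K q p hK hq hp0 hp1 hAS w0 hw0
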